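/- ℕ* satisfies induction for positive existential formulas: if A(x, ȳ) is a positive existential formula and ℕ* ⊨ ∀x ȳ (A(x,ȳ) → A(Sx,ȳ)), then ℕ* ⊨ ∀x ȳ (A(0,ȳ) → A(x,ȳ)). -/

import Mathlib

/-- Terms in the language {0, S, +, ·} with variables from `Fin n`. -/
inductive PTerm : ℕ → Type
  | var : ∀ {n}, Fin n → PTerm n
  | zero : ∀ {n}, PTerm n
  | succ : ∀ {n}, PTerm n → PTerm n
  | add : ∀ {n}, PTerm n → PTerm n → PTerm n
  | mul : ∀ {n}, PTerm n → PTerm n → PTerm n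

/-- Evaluation of a term in a structure with 0, 1 (for successor `x + 1`), + and ·. -/
def PTerm.eval {α : Type*} [Zero α] [One α] [Add α] [Mul α] :
    ∀ {n}, PTerm n → (Fin n → α) → α
  | _, .var i, v => v i
  | _, .zero, _ => 0
  | _, .succ t, v => t.eval v + 1
  | _, .add s t, v => s.eval v + t.eval v
  | _, .mul s t, v => s.eval v * t.eval v

/-- Positive existential formulas: built from equalities of terms by ∧, ∨, ∃. -/
inductive PForm : ℕ → Type
  | eq : ∀ {n}, PTerm n → PTerm n → PForm n
  | and : ∀ {n}, PForm n → PForm n → PForm n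
  | or : ∀ {n}, PForm n → PForm n → PForm n
  | ex : ∀ {n}, PForm (n + 1) → PForm n

/-- Classical satisfaction of a positive existential formula in a structure. -/
def PForm.Holds {α : Type*} [Zero α] [One α] [Add α] [Mul α] :
    ∀ {n}, PForm n → (Fin n → α) → Prop
  | _, .eq s t, v => s.eval v = t.eval v
  | _, .and φ ψ, v => φ.Holds v ∧ ψ.Holds v
  | _, .or φ ψ, v => φ.Holds v ∨ ψ.Holds v
  | _, .ex φ, v => ∃ a : α, φ.Holds (Fin.cons a v)


/-!
Give ℕ∞ its order topology, in which `+` and `·` are continuous and which is compact. Then every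
positive existentially definable set is closed: terms are continuous, equalities cut out closed
sets, `∧` and `∨` preserve closedness, and `∃` is a projection along the compact factor ℕ∞, which
is a closed map. Since ⊤ is the limit of the naturals, a closed set of ℕ∞ containing every natural
number contains ⊤ (overspill). Ordinary induction gives `A(m, ȳ)` for all `m : ℕ`, and overspill
gives `A(⊤, ȳ)`.
-/

open Filter

section Topological

variable {α : Type*} [TopologicalSpace α] [Zero α] [One α] [Add α] [Mul α]
  [ContinuousAdd α] [ContinuousMul α]

theorem PTerm.continuous_eval {k : ℕ} (t : PTerm k) : Continuous fun v : Fin k → α => t.eval v := by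
  induction t <;> simp only [PTerm.eval] <;> fun_prop

theorem PForm.isClosed_setOf_holds [T2Space α] [CompactSpace α] {k : ℕ} (φ : PForm k) :
    IsClosed {v : Fin k → α | φ.Holds v} := by
  induction φ with
  | eq s t => exact isClosed_eq s.continuous_eval t.continuous_eval
  | and φ ψ ihφ ihψ => exact ihφ.inter ihψ
  | or φ ψ ihφ ihψ => exact ihφ.union ihψ
  | @ex k φ ih =>
    have hcons : Continuous fun p : α × (Fin k → α) => (Fin.cons p.1 p.2 : Fin (k + 1) → α) :=
      continuous_fst.finCons (A := fun _ => α) continuous_snd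
    have hproj : {v : Fin k → α | ∃ a, φ.Holds (Fin.cons a v)} =
        Prod.snd '' {p : α × (Fin k → α) | φ.Holds (Fin.cons p.1 p.2)} := by
      ext v
      simp
    change IsClosed {v : Fin k → α | ∃ a, φ.Holds (Fin.cons a v)}
    rw [hproj]
    exact isClosedMap_snd_of_compactSpace _ (ih.preimage hcons)

end Topological

theorem ENat.mem_of_isClosed_of_forall_natCast_mem {C : Set ℕ∞} (hC : IsClosed C)
    (hnat : ∀ m : ℕ, (m : ℕ∞) ∈ C) (x : ℕ∞) : x ∈ C := by
  induction x using ENat.recTopCoe with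
  | top => exact hC.mem_of_tendsto ENat.tendsto_natCast_nhds_top (Eventually.of_forall hnat)
  | coe m => exact hnat m

/-- ℕ* satisfies induction for positive existential formulas: if
`∀ x ȳ (A(x,ȳ) → A(Sx,ȳ))` holds in ℕ*, then `∀ x ȳ (A(0,ȳ) → A(x,ȳ))` holds in ℕ*. -/
theorem stmt_7 {n : ℕ} (A : PForm (n + 1))
    (hstep : ∀ (v : Fin n → ℕ∞) (x : ℕ∞),
      A.Holds (Fin.cons x v) → A.Holds (Fin.cons (x + 1) v)) :
    ∀ (v : Fin n → ℕ∞) (x : ℕ∞), A.Holds (Fin.cons 0 v) → A.Holds (Fin.cons x v) := by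
  intro v x h0
  have hnat : ∀ m : ℕ, A.Holds (Fin.cons (m : ℕ∞) v) := by
    intro m
    induction m with
    | zero => exact_mod_cast h0
    | succ m ih => exact_mod_cast hstep v m ih
  have hclosed : IsClosed {y : ℕ∞ | A.Holds (Fin.cons y v)} :=
    A.isClosed_setOf_holds.preimage (continuous_id.finCons continuous_const)
  exact ENat.mem_of_isClosed_of_forall_natCast_mem hclosed hnat x
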